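/- arXiv:1902.05444 — 8 statements merged into one kernel-verified Lean document; each statement's English description precedes it below -/
import Mathlib

section
/- Let k be a commutative ring and let S and T be finite lattices. For every join-preserving map λ : S → T, the k-linear maps F_S(X) → F_T(X) sending a basis element φ : X → S to λ∘φ : X → T form a natural transformation F_λ : F_S → F_T of correspondence functors. Moreover, every natural transformation Φ : F_S → F_T of correspondence functors can be written as Φ = ∑_λ u_λ F_λ for unique coefficients u_λ ∈ k, the sum running over all join-preserving maps λ : S → T; that is, the canonical k-linear map from the free k-module on the set of join-preserving maps S → T to the k-module of natural transformations F_S → F_T, sending λ to F_λ, is bijective. -/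
open CategoryTheory
open scoped Classical

structure CorrCat : Type 1 where
  carrier : Type
  [fintype : Fintype carrier]

attribute [instance] CorrCat.fintype

instance : CoeSort CorrCat Type := ⟨CorrCat.carrier⟩

/-- Composition of correspondences: `corrComp R S = RS`. -/
def corrComp {X Y Z : Type*} (R : Set (Z × Y)) (S : Set (Y × X)) : Set (Z × X) :=
  {p | ∃ y, (p.1, y) ∈ R ∧ (y, p.2) ∈ S}

/-- Opposite correspondence. -/
def corrOp {X Y : Type*} (S : Set (Y × X)) : Set (X × Y) := {p | (p.2, p.1) ∈ S}

/-- Identity correspondence. -/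
def deltaCorr (X : Type*) : Set (X × X) := {p | p.1 = p.2}

instance : Category CorrCat where
  Hom X Y := Set (Y.carrier × X.carrier)
  id X := deltaCorr X.carrier
  comp {X Y Z} f g := corrComp g f
  id_comp {X Y} f := by
    show corrComp f (deltaCorr X.carrier) = f
    ext ⟨a, b⟩
    constructor
    · rintro ⟨y, hy, h⟩
      have hyb : y = b := h
      subst hyb
      exact hy
    · intro h
      exact ⟨b, h, rfl⟩
  comp_id {X Y} f := by
    show corrComp (deltaCorr Y.carrier) f = f
    ext ⟨a, b⟩
    constructor
    · rintro ⟨y, h, hy⟩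
      have hay : a = y := h
      subst hay
      exact hy
    · intro h
      exact ⟨a, rfl, h⟩
  assoc {W X Y Z} f g h := by
    show corrComp h (corrComp g f) = corrComp (corrComp h g) f
    ext ⟨a, b⟩
    constructor
    · rintro ⟨y, hy, x, hx1, hx2⟩
      exact ⟨x, ⟨y, hy, hx1⟩, hx2⟩
    · rintro ⟨x, ⟨y, hy, hx1⟩, hx2⟩
      exact ⟨y, hy, x, hx1, hx2⟩

/-- The action of a correspondence `Q ⊆ Y × X` on a function `φ : X → T`. -/
noncomputable def corrApp {T : Type*} [SemilatticeSup T] [OrderBot T]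
    {X Y : Type*} [Fintype X] (Q : Set (Y × X)) (φ : X → T) : Y → T :=
  fun y => (Finset.univ.filter fun x => (y, x) ∈ Q).sup φ

lemma corrApp_id {T : Type*} [SemilatticeSup T] [OrderBot T]
    {X : Type*} [Fintype X] (φ : X → T) : corrApp (deltaCorr X) φ = φ := by
  funext y
  have h : (Finset.univ.filter fun x => (y, x) ∈ deltaCorr X) = {y} := by
    ext x
    rw [Finset.mem_filter]
    simp [deltaCorr, eq_comm]
  unfold corrApp
  rw [h, Finset.sup_singleton]

lemma corrApp_comp {T : Type*} [SemilatticeSup T] [OrderBot T]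
    {X Y Z : Type*} [Fintype X] [Fintype Y]
    (R : Set (Z × Y)) (S : Set (Y × X)) (φ : X → T) :
    corrApp (corrComp R S) φ = corrApp R (corrApp S φ) := by
  funext z
  apply le_antisymm
  · apply Finset.sup_le
    intro x hx
    rw [Finset.mem_filter] at hx
    obtain ⟨-, y, hzy, hyx⟩ := hx
    calc φ x ≤ corrApp S φ y :=
          Finset.le_sup (Finset.mem_filter.2 ⟨Finset.mem_univ _, hyx⟩)
    _ ≤ _ := Finset.le_sup (f := corrApp S φ)
          (Finset.mem_filter.2 ⟨Finset.mem_univ _, hzy⟩)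
  · apply Finset.sup_le
    intro y hy
    rw [Finset.mem_filter] at hy
    apply Finset.sup_le
    intro x hx
    rw [Finset.mem_filter] at hx
    exact Finset.le_sup (Finset.mem_filter.2 ⟨Finset.mem_univ _, ⟨y, hy.2, hx.2⟩⟩)

variable (k : Type) [CommRing k]

/-- The correspondence functor `F_T` associated to a finite lattice `T`. -/
noncomputable def FT (T : Type) [Lattice T] [OrderBot T] [Fintype T] :
    CorrCat ⥤ ModuleCat k where
  obj X := ModuleCat.of k ((X.carrier → T) →₀ k)
  map {X Y} Q := ModuleCat.ofHom (Finsupp.lmapDomain k k (corrApp (T := T) Q))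
  map_id X := by
    show ModuleCat.ofHom (Finsupp.lmapDomain k k (corrApp (deltaCorr X.carrier))) = _
    have : (corrApp (T := T) (deltaCorr X.carrier)) = id := by
      funext φ
      exact corrApp_id φ
    rw [this, Finsupp.lmapDomain_id]
    rfl
  map_comp {X Y Z} f g := by
    show ModuleCat.ofHom (Finsupp.lmapDomain k k (corrApp (corrComp g f))) = _
    have : (corrApp (T := T) (corrComp g f)) = corrApp g ∘ corrApp f := by
      funext φ
      exact corrApp_comp g f φ
    rw [this, Finsupp.lmapDomain_comp]
    rfl

/-- A map between finite lattices is join-preserving (a morphism in the category `𝓛`)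
if it commutes with arbitrary (finite) joins; in particular it sends `⊥` to `⊥`. -/
def JoinPreserving {S T : Type*} [Lattice S] [OrderBot S] [Lattice T] [OrderBot T]
    (f : S → T) : Prop :=
  ∀ A : Finset S, f (A.sup id) = A.sup f

/-! A natural transformation `Φ : F_S → F_T` is determined by the image `w` of the generic
element `id ∈ F_S(S)`, since `φ = F_S(Δ_φ)(id)` for the correspondence
`Δ_φ = {(x, s) | s ≤ φ x}`; then `Φ(φ) = ∑ w_ψ (ψ ∘ φ)` as soon as `w` is supported on
join-preserving maps. That support condition is forced by naturality along the correspondence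
which redefines a map at `a = ⋁ A` as the join over `A`: it fixes `id`, so it fixes `w`,
while no map `θ` with `θ a ≠ ⋁ θ(A)` lies in its image. -/

open Finsupp

theorem Finsupp.existsUnique_mapDomain_subtypeVal_eq {α M : Type*} [AddCommMonoid M]
    {p : α → Prop} (v : α →₀ M) (hv : ∀ a ∈ v.support, p a) :
    ∃! u : Subtype p →₀ M, u.mapDomain Subtype.val = v := by
  have hval (u : Subtype p →₀ M) : u.mapDomain Subtype.val = u.extendDomain :=
    ((extendDomain_eq_embDomain_subtype u).trans (embDomain_eq_mapDomain _ u)).symm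
  refine ⟨v.subtypeDomain p, ?_, fun u hu => mapDomain_injective Subtype.val_injective ?_⟩
  · exact (hval _).trans (extendDomain_subtypeDomain v hv)
  · rw [hu, hval, extendDomain_subtypeDomain v hv]

section Lattice

variable {S T : Type*} [Lattice S] [OrderBot S] [Lattice T] [OrderBot T]

theorem joinPreserving_id : JoinPreserving (id : S → S) := fun _ => rfl

theorem JoinPreserving.map_finset_sup {l : S → T} (hl : JoinPreserving l) {X : Type*}
    (A : Finset X) (φ : X → S) : l (A.sup φ) = A.sup (l ∘ φ) := by
  rw [← Finset.sup_image, ← hl, Finset.sup_image, Function.id_comp]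

theorem JoinPreserving.corrApp_comp {l : S → T} (hl : JoinPreserving l) {X Y : Type*}
    [Fintype X] (Q : Set (Y × X)) (φ : X → S) : corrApp Q (l ∘ φ) = l ∘ corrApp Q φ :=
  funext fun _ => (hl.map_finset_sup _ φ).symm

def belowCorr {X : Type*} (φ : X → S) : Set (X × S) := {p | p.2 ≤ φ p.1}

theorem corrApp_belowCorr [Fintype S] {X : Type*} (φ : X → S) {ψ : S → T}
    (hψ : JoinPreserving ψ) : corrApp (belowCorr φ) ψ = ψ ∘ φ := by
  funext x
  have hsup : (Finset.univ.filter fun s => (x, s) ∈ belowCorr φ).sup id = φ x :=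
    le_antisymm (Finset.sup_le fun s hs => (Finset.mem_filter.1 hs).2)
      (Finset.le_sup (f := id) (Finset.mem_filter.2 ⟨Finset.mem_univ _, le_rfl⟩))
  rw [Function.comp_apply, ← hsup, hψ]
  rfl

theorem corrApp_belowCorr_id [Fintype S] {X : Type*} (φ : X → S) :
    corrApp (belowCorr φ) (id : S → S) = φ :=
  corrApp_belowCorr φ joinPreserving_id

end Lattice

section Update

variable {S T : Type*} [Lattice T] [OrderBot T]

def updateCorr (a : S) (A : Finset S) : Set (S × S) :=
  {p | (p.1 ≠ a ∧ p.2 = p.1) ∨ (p.1 = a ∧ p.2 ∈ A)}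

theorem corrApp_updateCorr [Fintype S] (a : S) (A : Finset S) (ψ : S → T) :
    corrApp (updateCorr a A) ψ = Function.update ψ a (A.sup ψ) := by
  funext x
  by_cases hx : x = a
  · subst hx
    have hA : (Finset.univ.filter fun s => (x, s) ∈ updateCorr x A) = A := by
      ext s
      simp [updateCorr]
    rw [Function.update_self, corrApp, hA]
  · have hx' : (Finset.univ.filter fun s => (x, s) ∈ updateCorr a A) = {x} := by
      ext s
      simp [updateCorr, hx, eq_comm (a := s)]
    rw [Function.update_of_ne hx, corrApp, hx', Finset.sup_singleton]

theorem Finset.sup_update_sup (a : S) (A : Finset S) (ψ : S → T) :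
    A.sup (Function.update ψ a (A.sup ψ)) = A.sup ψ := by
  refine le_antisymm (Finset.sup_le fun s hs => ?_) (Finset.sup_mono_fun fun s _ => ?_)
  · rcases eq_or_ne s a with rfl | hsa
    · rw [Function.update_self]
    · rw [Function.update_of_ne hsa]
      exact Finset.le_sup hs
  · rcases eq_or_ne s a with rfl | hsa
    · rw [Function.update_self]
      exact Finset.le_sup ‹s ∈ A›
    · rw [Function.update_of_ne hsa]

theorem notMem_range_update_finset_sup {θ : S → T} {a : S} {A : Finset S}
    (hθ : θ a ≠ A.sup θ) :
    θ ∉ Set.range fun ψ : S → T => Function.update ψ a (A.sup ψ) := by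
  rintro ⟨ψ, rfl⟩
  dsimp only at hθ
  rw [Finset.sup_update_sup, Function.update_self] at hθ
  exact hθ rfl

end Update

variable {k}
variable {S T : Type} [Lattice S] [Fintype S] [OrderBot S] [Lattice T] [Fintype T] [OrderBot T]

theorem FT_map_apply {X Y : CorrCat} (Q : X ⟶ Y) (v : (X.carrier → T) →₀ k) :
    (FT k T).map Q v = v.mapDomain (corrApp Q) :=
  rfl

theorem JoinPreserving.FT_map_mapDomain_comp {l : S → T} (hl : JoinPreserving l)
    {X Y : CorrCat} (Q : X ⟶ Y) (v : (X.carrier → S) →₀ k) :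
    (FT k T).map Q (v.mapDomain (l ∘ ·)) = ((FT k S).map Q v).mapDomain (l ∘ ·) := by
  rw [FT_map_apply, FT_map_apply, ← mapDomain_comp, ← mapDomain_comp]
  exact congrArg (mapDomain · v) (funext (hl.corrApp_comp Q))

theorem FT_naturality_apply (Φ : FT k S ⟶ FT k T) {X Y : CorrCat} (Q : X ⟶ Y)
    (v : (X.carrier → S) →₀ k) :
    Φ.app Y ((FT k S).map Q v) = (FT k T).map Q (Φ.app X v) :=
  LinearMap.congr_fun (congrArg ModuleCat.Hom.hom (Φ.naturality Q)) v

theorem FT_app_map_single_id (Φ : FT k S ⟶ FT k T) {Y : CorrCat}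
    (Q : (⟨S⟩ : CorrCat) ⟶ Y) :
    Φ.app Y ((FT k S).map Q (single id 1)) =
      (Φ.app ⟨S⟩ (single id 1)).mapDomain (corrApp Q) :=
  FT_naturality_apply Φ Q _

theorem FT_app_single_eq (Φ : FT k S ⟶ FT k T) (X : CorrCat) (φ : X.carrier → S) :
    Φ.app X (single φ 1) = (Φ.app ⟨S⟩ (single id 1)).mapDomain (corrApp (belowCorr φ)) := by
  have hφ : (FT k S).map (X := ⟨S⟩) (belowCorr φ) (single id 1) = single φ 1 := by
    rw [FT_map_apply, mapDomain_single, corrApp_belowCorr_id]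
  rw [← FT_app_map_single_id, hφ]

theorem joinPreserving_of_mem_support_FT_app_single_id (Φ : FT k S ⟶ FT k T) {θ : S → T}
    (hθ : θ ∈ (Φ.app ⟨S⟩ (single id 1)).support) : JoinPreserving θ := by
  by_contra hjp
  obtain ⟨A, hA⟩ := not_forall.1 hjp
  have hfix :
      (FT k S).map (X := ⟨S⟩) (updateCorr (A.sup id) A) (single id 1) = single id 1 := by
    rw [FT_map_apply, mapDomain_single, corrApp_updateCorr]
    exact congrArg (single · (1 : k)) (Function.update_eq_self (A.sup id) id)
  have hw := FT_app_map_single_id Φ (updateCorr (A.sup id) A)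
  rw [hfix, funext (corrApp_updateCorr (T := T) (A.sup id) A)] at hw
  rw [hw, mem_support_iff] at hθ
  exact hθ (mapDomain_of_notMem_range _ _ (notMem_range_update_finset_sup hA))

theorem FT_app_single_eq_iff (Φ : FT k S ⟶ FT k T)
    (u : {f : S → T // JoinPreserving f} →₀ k) :
    (∀ (X : CorrCat) (φ : X.carrier → S),
      Φ.app X (single φ 1) = u.mapDomain fun l => l.1 ∘ φ) ↔
    u.mapDomain Subtype.val = Φ.app ⟨S⟩ (single id 1) := by
  refine ⟨fun h => (h ⟨S⟩ id).symm, fun h X φ => ?_⟩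
  rw [FT_app_single_eq, ← h, ← mapDomain_comp]
  exact mapDomain_congr fun l _ => corrApp_belowCorr φ l.2

/-- For every join-preserving map `l : S → T`, the maps
`F_S(X) → F_T(X)`, `φ ↦ l ∘ φ` on basis elements, are natural in `X`; and every natural
transformation `F_S → F_T` is a linear combination `∑_l u_l F_l` over join-preserving
maps `l : S → T`, with unique coefficients `u_l ∈ k`. -/
theorem FT_fully_faithful (k : Type) [CommRing k]
    (S T : Type) [Lattice S] [Fintype S] [BoundedOrder S]
    [Lattice T] [Fintype T] [BoundedOrder T] :
    (∀ (l : S → T), JoinPreserving l →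
      ∀ (X Y : CorrCat) (Q : X ⟶ Y) (v : (X.carrier → S) →₀ k),
        (FT k T).map Q (Finsupp.mapDomain (fun φ => l ∘ φ) v) =
          Finsupp.mapDomain (fun φ => l ∘ φ) ((FT k S).map Q v)) ∧
    (∀ Φ : FT k S ⟶ FT k T, ∃! u : {f : S → T // JoinPreserving f} →₀ k,
      ∀ (X : CorrCat) (φ : X.carrier → S),
        Φ.app X (Finsupp.single φ (1 : k)) =
          u.sum fun l c => Finsupp.single ((l : S → T) ∘ φ) c) := by
  refine ⟨fun l hl X Y Q v => hl.FT_map_mapDomain_comp Q v, fun Φ => ?_⟩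
  obtain ⟨u, hu, huniq⟩ := existsUnique_mapDomain_subtypeVal_eq _
    fun _ => joinPreserving_of_mem_support_FT_app_single_id Φ
  exact ⟨u, (FT_app_single_eq_iff Φ u).2 hu,
    fun u' hu' => huniq u' ((FT_app_single_eq_iff Φ u').1 hu')⟩
end

section
/- Let T be a finite lattice with set E of join-irreducible elements, let Q ⊆ Y × X be a correspondence between finite sets, and let φ : X → T be a map. Then every join-irreducible element of T lying in the image of Qφ lies in the image of φ; that is, (Qφ)(Y) ∩ E ⊆ φ(X) ∩ E. Consequently, for any commutative ring k, the assignment sending a finite set X to the k-submodule H_T(X) of F_T(X) spanned by the maps φ : X → T with E not contained in φ(X) defines a subfunctor H_T of the correspondence functor F_T. -/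
open scoped Classical

/-- `H_T(X)`: the `k`-submodule of `F_T(X)` spanned by the basis maps `φ : X → T`
whose image does not contain all join-irreducible elements of `T`. -/
noncomputable def HT (k : Type) [CommRing k] (T : Type) [Lattice T] [OrderBot T]
    (X : Type) [Fintype X] : Submodule k ((X → T) →₀ k) :=
  Submodule.span k
    {v | ∃ φ : X → T, ¬ (∀ e : T, SupIrred e → e ∈ Set.range φ) ∧ v = Finsupp.single φ 1}

/-- Every join-irreducible element of `T` in the image of `Qφ` lies in
the image of `φ`; consequently the submodules `H_T(X) ⊆ F_T(X)` are preserved by the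
action of every correspondence, i.e. `H_T` is a subfunctor of `F_T`. -/
theorem HT_subfunctor (k : Type) [CommRing k]
    (T : Type) [Lattice T] [Fintype T] [BoundedOrder T] :
    (∀ (X Y : Type) [Fintype X] [Fintype Y] (Q : Set (Y × X)) (φ : X → T) (e : T),
      SupIrred e → e ∈ Set.range (corrApp Q φ) → e ∈ Set.range φ) ∧
    (∀ (X Y : Type) [Fintype X] [Fintype Y] (Q : Set (Y × X)),
      Submodule.map (Finsupp.lmapDomain k k (corrApp (T := T) Q)) (HT k T X) ≤ HT k T Y) := by
  have main : ∀ (X Y : Type) [Fintype X] [Fintype Y] (Q : Set (Y × X)) (φ : X → T) (e : T),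
      SupIrred e → e ∈ Set.range (corrApp Q φ) → e ∈ Set.range φ := by
    intro X Y _ _ Q φ e he ⟨y, hy⟩
    obtain ⟨x, -, hx⟩ := he.finset_sup_eq hy
    exact ⟨x, hx⟩
  refine ⟨main, ?_⟩
  intro X Y _ _ Q
  rw [HT, Submodule.map_span, Submodule.span_le]
  rintro v ⟨w, ⟨φ, hφ, rfl⟩, rfl⟩
  refine Submodule.subset_span ⟨corrApp Q φ, ?_, ?_⟩
  · intro h
    exact hφ fun e he => main X Y Q φ e he (h e he)
  · simp [Finsupp.lmapDomain, Finsupp.mapDomain_single]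
end

section
/- Let (E,R) be a finite poset, X a finite set, and S ⊆ X × E a correspondence with SR = S. Then there exists a correspondence U ⊆ E × X with US = R if and only if for every e ∈ E there exists x ∈ X such that {f ∈ E | (x,f) ∈ S} = [e,·[_R := {f ∈ E | e ≤_R f}. -/
open scoped Classical

/-- Let `(E,R)` be a finite poset and `S ⊆ X × E` with `SR = S`.
Then `S` has a retraction `U ⊆ E × X` (i.e. `US = R`) if and only if for every `e ∈ E`
there is `x ∈ X` with `{f | (x,f) ∈ S} = [e,·[ = {f | e ≤ f}`. -/
theorem retraction_iff (E : Type) [Fintype E] [PartialOrder E] (X : Type) [Fintype X]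
    (S : Set (X × E)) (hS : corrComp S {p : E × E | p.1 ≤ p.2} = S) :
    (∃ U : Set (E × X), corrComp U S = {p : E × E | p.1 ≤ p.2}) ↔
      ∀ e : E, ∃ x : X, {f : E | (x, f) ∈ S} = {f : E | e ≤ f} := by
  constructor
  · rintro ⟨U, hU⟩ e
    have he : (e, e) ∈ corrComp U S := by rw [hU]; exact le_refl e
    obtain ⟨x, hx, hxe⟩ := he
    refine ⟨x, Set.ext fun f => ⟨fun hf => ?_, fun hf => ?_⟩⟩
    · have : (e, f) ∈ corrComp U S := ⟨x, hx, hf⟩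
      rw [hU] at this; exact this
    · rw [← hS]; exact ⟨e, hxe, hf⟩
  · intro h
    refine ⟨{p | {f : E | (p.2, f) ∈ S} = {f : E | p.1 ≤ f}}, ?_⟩
    ext ⟨e, f⟩
    constructor
    · rintro ⟨x, hx, hxf⟩
      have := Set.ext_iff.mp hx f
      exact this.mp hxf
    · intro hef
      obtain ⟨x, hx⟩ := h e
      exact ⟨x, hx, (Set.ext_iff.mp hx f).mpr hef⟩
end

section
/- Let T be a finite lattice, (E,R) its poset of join-irreducible elements, and ι : E → T the inclusion map. Let X be a finite set, W ⊆ E × X a correspondence, and φ : X → T a map. Then W Γ_φ = R^op (composite of correspondences) if and only if Wφ = ι, where (Wφ)(e) = ⋁ {φ(x) | x ∈ X, (e,x) ∈ W}, the join over the empty set being 0̂. -/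
open scoped Classical

/-- In a finite lattice, `a ≤ b` as soon as every sup-irreducible below `a` is below `b`. -/
lemma le_of_supIrred_le {T : Type} [Lattice T] [Fintype T] [BoundedOrder T] {a b : T}
    (h : ∀ c : T, SupIrred c → c ≤ a → c ≤ b) : a ≤ b := by
  obtain ⟨s, hsup, hirr⟩ := exists_supIrred_decomposition a
  rw [← hsup]
  exact Finset.sup_le fun c hc => h c (hirr hc) (hsup ▸ Finset.le_sup (f := id) hc)

/-- Let `T` be a finite lattice with poset `(E,R)` of join-irreducible
elements, `W ⊆ E × X` a correspondence and `φ : X → T` a map. Then `W Γ_φ = R^op` if and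
only if `Wφ = ι`, where `ι : E → T` is the inclusion. -/
theorem W_gamma_eq_Rop_iff (T : Type) [Lattice T] [Fintype T] [BoundedOrder T]
    (X : Type) [Fintype X] (W : Set ({t : T // SupIrred t} × X)) (φ : X → T) :
    corrComp W {p : X × {t : T // SupIrred t} | (p.2 : T) ≤ φ p.1} =
        {p : {t : T // SupIrred t} × {t : T // SupIrred t} | (p.2 : T) ≤ (p.1 : T)} ↔
      corrApp W φ = fun e : {t : T // SupIrred t} => (e : T) := by
  constructor
  · intro h
    funext e
    apply le_antisymm
    · apply Finset.sup_le
      intro x hx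
      rw [Finset.mem_filter] at hx
      apply le_of_supIrred_le
      intro c hc hcx
      have : (e, (⟨c, hc⟩ : {t : T // SupIrred t})) ∈
          corrComp W {p : X × {t : T // SupIrred t} | (p.2 : T) ≤ φ p.1} :=
        ⟨x, hx.2, hcx⟩
      rw [h] at this
      exact this
    · have : (e, e) ∈ corrComp W {p : X × {t : T // SupIrred t} | (p.2 : T) ≤ φ p.1} := by
        rw [h]; exact le_refl (e : T)
      obtain ⟨x, hxW, hxle⟩ := this
      exact le_trans hxle (Finset.le_sup (Finset.mem_filter.2 ⟨Finset.mem_univ x, hxW⟩))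
  · intro h
    ext ⟨e, f⟩
    constructor
    · rintro ⟨x, hxW, hxle⟩
      have hx : φ x ≤ corrApp W φ e :=
        Finset.le_sup (Finset.mem_filter.2 ⟨Finset.mem_univ x, hxW⟩)
      rw [h] at hx
      exact le_trans hxle hx
    · intro hfe
      have he : corrApp W φ e = (e : T) := congrFun h e
      obtain ⟨x, hx, hxe⟩ := e.2.finset_sup_eq he
      rw [Finset.mem_filter] at hx
      exact ⟨x, hx.2, le_trans hfe hxe.ge⟩
end

section
/- Let T be a finite lattice, (E,R) its poset of join-irreducible elements, ι : E → T the inclusion map, X a finite set, φ : X → T a map, and ψ : X → I^↑(E,R) a map. Then the following conditions are equivalent: (1) Γ_ψ^op φ = ι, i.e. for every e ∈ E, ⋁ {φ(x) | x ∈ X, e ∈ ψ(x)} = e; (2) Δ_E ⊆ Γ_ψ^op Γ_φ ⊆ R^op; (3) Γ_ψ^op Γ_φ = R^op; (4) for every x ∈ X, φ(x) ≤_T ⋀ {e | e ∈ ψ(x)} (empty meet = 1̂), and for every e ∈ E there exists x ∈ X with φ(x) = e and ψ(x) = [e,·[_E := {f ∈ E | e ≤_R f}; (5) for every t ∈ T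 and every x ∈ X with φ(x) = t one has ψ(x) ⊆ {e ∈ E | t ≤_T e}, and for every e ∈ E the union of the sets ψ(x) over all x ∈ X with φ(x) = e equals [e,·[_E. -/
open scoped Classical

lemma le_of_supIrred_le_s8 {T : Type} [Lattice T] [Fintype T] [OrderBot T]
    {t e : T} (h : ∀ f : T, SupIrred f → f ≤ t → f ≤ e) : t ≤ e := by
  obtain ⟨s, hs, hirr⟩ := exists_supIrred_decomposition t
  rw [← hs]
  exact Finset.sup_le fun b hb => h b (hirr hb) (hs ▸ Finset.le_sup (f := id) hb)

/-- Let `T` be a finite lattice with full subposet `(E,R)` of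
join-irreducible elements, `φ : X → T` and `ψ : X → I^↑(E,R)` maps. The five listed
conditions are equivalent. -/
theorem gammapsigamma (T : Type) [Lattice T] [Fintype T] [BoundedOrder T]
    (X : Type) [Fintype X] (φ : X → T)
    (ψ : X → UpperSet {t : T // SupIrred t}) :
    [ -- (1) `Γ_ψ^op φ = ι`
      corrApp (corrOp {p : X × {t : T // SupIrred t} | p.2 ∈ ψ p.1}) φ =
        (fun e : {t : T // SupIrred t} => (e : T)),
      -- (2) `Δ_E ⊆ Γ_ψ^op Γ_φ ⊆ R^op`
      deltaCorr {t : T // SupIrred t} ⊆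
          corrComp (corrOp {p : X × {t : T // SupIrred t} | p.2 ∈ ψ p.1})
            {p : X × {t : T // SupIrred t} | (p.2 : T) ≤ φ p.1} ∧
        corrComp (corrOp {p : X × {t : T // SupIrred t} | p.2 ∈ ψ p.1})
            {p : X × {t : T // SupIrred t} | (p.2 : T) ≤ φ p.1} ⊆
          {p : {t : T // SupIrred t} × {t : T // SupIrred t} | (p.2 : T) ≤ (p.1 : T)},
      -- (3) `Γ_ψ^op Γ_φ = R^op`
      corrComp (corrOp {p : X × {t : T // SupIrred t} | p.2 ∈ ψ p.1})
          {p : X × {t : T // SupIrred t} | (p.2 : T) ≤ φ p.1} =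
        {p : {t : T // SupIrred t} × {t : T // SupIrred t} | (p.2 : T) ≤ (p.1 : T)},
      -- (4) `φ ≤ ∧ψ` and every `e ∈ E` is attained with upper ideal `[e,·[`
      (∀ x : X, φ x ≤
          (Finset.univ.filter fun e : {t : T // SupIrred t} => e ∈ ψ x).inf
            (fun e => (e : T))) ∧
        (∀ e : {t : T // SupIrred t}, ∃ x : X, φ x = (e : T) ∧ ψ x = UpperSet.Ici e),
      -- (5) image/preimage formulation
      (∀ t : T, ∀ x : X, φ x = t →
          ∀ e : {t : T // SupIrred t}, e ∈ ψ x → t ≤ (e : T)) ∧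
        (∀ e : {t : T // SupIrred t},
          {f : {t : T // SupIrred t} | ∃ x : X, φ x = (e : T) ∧ f ∈ ψ x} =
            {f : {t : T // SupIrred t} | e ≤ f}) ].TFAE := by
  tfae_have 1 → 2
  | h1 => by
    constructor
    · rintro ⟨e, f⟩ (hef : e = f)
      subst hef
      have he := congrFun h1 e
      simp only [corrApp, corrOp, Set.mem_setOf_eq] at he
      obtain ⟨x, hx, hfx⟩ := e.2.finset_sup_eq he
      exact ⟨x, (Finset.mem_filter.mp hx).2, hfx.ge⟩
    · rintro ⟨e, f⟩ ⟨x, hex, hfx⟩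
      have he := congrFun h1 e
      simp only [corrApp, corrOp, Set.mem_setOf_eq] at he
      calc (f : T) ≤ φ x := hfx
        _ ≤ _ := Finset.le_sup (Finset.mem_filter.mpr ⟨Finset.mem_univ x, hex⟩)
        _ = (e : T) := he
  tfae_have 2 → 3
  | ⟨h2a, h2b⟩ => by
    ext ⟨e, f⟩
    constructor
    · exact fun h => h2b h
    · intro (hfe : (f : T) ≤ (e : T))
      obtain ⟨x, hex, heφ⟩ := h2a (show (e, e) ∈ deltaCorr _ from rfl)
      exact ⟨x, hex, le_trans hfe heφ⟩
  tfae_have 3 → 5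
  | h3 => by
    have mem : ∀ e f : {t : T // SupIrred t},
        (∃ x, e ∈ ψ x ∧ (f : T) ≤ φ x) ↔ (f : T) ≤ (e : T) := by
      intro e f
      have := Set.ext_iff.mp h3 (e, f)
      simpa [corrComp, corrOp] using this
    have first : ∀ x : X, ∀ e : {t : T // SupIrred t}, e ∈ ψ x → φ x ≤ (e : T) := by
      intro x e hex
      exact le_of_supIrred_le_s8 fun g hg hgφ => (mem e ⟨g, hg⟩).mp ⟨x, hex, hgφ⟩
    refine ⟨fun t x hφ e hex => hφ ▸ first x e hex, fun e => ?_⟩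
    ext f
    simp only [Set.mem_setOf_eq]
    constructor
    · rintro ⟨x, hφ, hfx⟩
      exact Subtype.coe_le_coe.mp (hφ ▸ first x f hfx)
    · intro hef
      obtain ⟨x, hex, heφ⟩ := (mem e e).mpr le_rfl
      have hφ : φ x = (e : T) := le_antisymm (first x e hex) heφ
      exact ⟨x, hφ, (ψ x).upper hef hex⟩
  tfae_have 5 → 4
  | ⟨h5a, h5b⟩ => by
    constructor
    · intro x
      exact Finset.le_inf fun e he =>
        h5a (φ x) x rfl e (Finset.mem_filter.mp he).2
    · intro e
      have he : e ∈ {f : {t : T // SupIrred t} | e ≤ f} := le_rfl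
      rw [← h5b e] at he
      obtain ⟨x, hφ, hex⟩ := he
      refine ⟨x, hφ, UpperSet.ext (Set.ext fun f => ?_)⟩
      constructor
      · intro hfx
        have : f ∈ {f : {t : T // SupIrred t} | ∃ x, φ x = (e : T) ∧ f ∈ ψ x} :=
          ⟨x, hφ, hfx⟩
        rw [h5b e] at this
        exact this
      · intro hf
        exact (ψ x).upper (UpperSet.mem_Ici_iff.mp hf) hex
  tfae_have 4 → 1
  | ⟨h4a, h4b⟩ => by
    funext e
    obtain ⟨x, hφ, hψ⟩ := h4b e
    simp only [corrApp, corrOp, Set.mem_setOf_eq]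
    apply le_antisymm
    · refine Finset.sup_le fun x' hx' => le_trans (h4a x') ?_
      exact Finset.inf_le (Finset.mem_filter.mpr
        ⟨Finset.mem_univ _, (Finset.mem_filter.mp hx').2⟩)
    · calc (e : T) = φ x := hφ.symm
        _ ≤ _ := Finset.le_sup (Finset.mem_filter.mpr
            ⟨Finset.mem_univ x, hψ ▸ UpperSet.mem_Ici_iff.mpr le_rfl⟩)
  tfae_finish
end

section
/- Let k be a commutative ring which is self-injective, i.e. k is injective as a k-module. Then for every finite distributive lattice T, the correspondence functor F_T is both a projective object and an injective object of the category of correspondence functors over k. -/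
open CategoryTheory
open scoped Classical

variable (k : Type) [CommRing k]

/-!
Write `J` for the join-irreducible elements of `T`. Birkhoff's embedding `T → 𝒫(J)` and the join
map `𝒫(J) → T` both preserve finite joins, and the join map is a retraction of the embedding.
Post-composing with them makes `F_T` a retract of `F_{𝒫(J)}`, so it is enough to show that
`F_{𝒫(J)}` is projective and injective.

A map `X → 𝒫(J)` is the same thing as a correspondence `J → X`. This identifies `F_{𝒫(J)}` with
the free functor `k𝒞(J, -)`, which is projective by the Yoneda lemma. Next, pair a correspondence
`Q : J → X` with `S : X → J` by asking whether `SQ` misses the diagonal of `J`. This pairing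
identifies `k𝒞(J, -)` with the dual functor `k^{𝒞(-, J)}`. In the bases of correspondences, the
pairing matrix is the zeta matrix of the Boolean lattice of subsets of `X × J` (up to relabelling
one of the bases), so Möbius inversion shows that it is invertible. The dual functor is injective
when `k` is self-injective, because a natural transformation `M → k^{𝒞(-, J)}` is the same thing
as a linear form on `M(J)`.
-/

universe u v

section ZetaTransform

variable {k : Type*} [CommRing k] {α : Type*} [Fintype α] [PartialOrder α]

lemma IncidenceAlgebra.mul_apply_eq_sum_univ [LocallyFiniteOrder α] (f g : IncidenceAlgebra k α)
    (a b : α) : (f * g) a b = ∑ x, f a x * g x b := by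
  rw [IncidenceAlgebra.mul_apply]
  refine Finset.sum_subset (Finset.subset_univ _) fun x _ hx => ?_
  rcases not_and_or.1 (Finset.mem_Icc.not.1 hx) with hx | hx
  · rw [IncidenceAlgebra.apply_eq_zero_of_not_le hx, zero_mul]
  · rw [IncidenceAlgebra.apply_eq_zero_of_not_le hx, mul_zero]

theorem bijective_linearCombination_le :
    Function.Bijective
      (Finsupp.linearCombination k fun a b : α => if a ≤ b then (1 : k) else 0) := by
  let : LocallyFiniteOrder α := Fintype.toLocallyFiniteOrder
  set ζ := Finsupp.linearCombination k fun a b : α => if a ≤ b then (1 : k) else 0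
  let z := IncidenceAlgebra.zeta k (α := α)
  let μ := IncidenceAlgebra.mu k (α := α)
  have hζ (v : α →₀ k) (b : α) : ζ v b = ∑ a, v a * z a b := by
    simp [ζ, z, Finsupp.linearCombination_apply, Finsupp.sum_fintype]
  have sum_sum_mul (v : α → k) (f g : IncidenceAlgebra k α) (c : α) :
      ∑ b, (∑ a, v a * f a b) * g b c = ∑ a, v a * (f * g) a c := by
    simp only [IncidenceAlgebra.mul_apply_eq_sum_univ, Finset.mul_sum, Finset.sum_mul, mul_assoc]
    exact Finset.sum_comm
  constructor
  · refine (injective_iff_map_eq_zero ζ).2 fun v hv => Finsupp.ext fun c => ?_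
    have h := sum_sum_mul v z μ c
    simp only [← hζ, hv, Pi.zero_apply, zero_mul, Finset.sum_const_zero, z, μ,
      IncidenceAlgebra.zeta_mul_mu, IncidenceAlgebra.one_apply] at h
    simpa using h.symm
  · intro g
    refine ⟨Finsupp.equivFunOnFinite.symm fun b => ∑ a, g a * μ a b, funext fun c => ?_⟩
    have h := sum_sum_mul g μ z c
    simp only [z, μ, IncidenceAlgebra.mu_mul_zeta, IncidenceAlgebra.one_apply] at h
    rw [hζ]
    simpa [z, μ] using h

end ZetaTransform

section FreeCoyoneda

variable {C : Type u} [Category.{v} C] (k : Type v) [CommRing k]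

noncomputable abbrev freeCoyoneda (E : C) : C ⥤ ModuleCat k :=
  coyoneda.obj (Opposite.op E) ⋙ ModuleCat.free k

variable {k}

noncomputable def freeCoyonedaEquiv {E : C} {M : C ⥤ ModuleCat k} :
    (freeCoyoneda k E ⟶ M) ≃ M.obj E :=
  (((ModuleCat.adj k).whiskerRight C).homEquiv _ _).trans coyonedaEquiv

lemma freeCoyonedaEquiv_comp {E : C} {M N : C ⥤ ModuleCat k} (f : freeCoyoneda k E ⟶ M)
    (g : M ⟶ N) : freeCoyonedaEquiv (f ≫ g) = g.app E (freeCoyonedaEquiv f) :=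
  rfl

instance projective_freeCoyoneda (E : C) : Projective (freeCoyoneda k E) where
  factors {_ _} f e _ := by
    obtain ⟨m, hm⟩ :=
      (ModuleCat.epi_iff_surjective (e.app E)).1 inferInstance (freeCoyonedaEquiv f)
    exact ⟨freeCoyonedaEquiv.symm m, freeCoyonedaEquiv.injective
      (by rw [freeCoyonedaEquiv_comp, Equiv.apply_symm_apply, hm])⟩

end FreeCoyoneda

section DualYoneda

variable {C : Type u} [Category.{v} C] (k : Type v) [CommRing k]

def dualYoneda (E : C) : C ⥤ ModuleCat k where
  obj X := ModuleCat.of k ((X ⟶ E) → k)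
  map f := ModuleCat.ofHom (LinearMap.funLeft k k (f ≫ ·))
  map_id _ := by ext; simp
  map_comp _ _ := by ext; simp

variable {k} {E : C} {M M' : C ⥤ ModuleCat k}

def dualYonedaLift (β : M.obj E →ₗ[k] k) : M ⟶ dualYoneda k E where
  app X := ModuleCat.ofHom (LinearMap.pi fun S => β ∘ₗ (M.map S).hom)
  naturality _ _ f := by
    ext m
    funext S
    change β (M.map S (M.map f m)) = β (M.map (f ≫ S) m)
    rw [Functor.map_comp]
    rfl

lemma dualYonedaLift_app_apply (β : M.obj E →ₗ[k] k) {X : C} (m : M.obj X) (S : X ⟶ E) :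
    (dualYonedaLift β).app X m S = β (M.map S m) :=
  rfl

lemma comp_dualYonedaLift (f : M' ⟶ M) (β : M.obj E →ₗ[k] k) :
    f ≫ dualYonedaLift β = dualYonedaLift (β ∘ₗ (f.app E).hom) := by
  ext X m
  funext S
  simp [dualYonedaLift_app_apply]

lemma eq_dualYonedaLift (g : M ⟶ dualYoneda k E) :
    g = dualYonedaLift (LinearMap.proj (𝟙 E) ∘ₗ (g.app E).hom) := by
  ext X m
  funext S
  have h := congrFun (ConcreteCategory.congr_hom (g.naturality S) m) (𝟙 E)
  change g.app E (M.map S m) (𝟙 E) = g.app X m (S ≫ 𝟙 E) at h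
  rw [Category.comp_id] at h
  exact h.symm

theorem injective_dualYoneda (hk : Module.Injective k k) : Injective (dualYoneda k E) where
  factors {_ _} g f _ := by
    obtain ⟨β, hβ⟩ := hk.out (f.app E).hom
      ((ModuleCat.mono_iff_injective (f.app E)).1 inferInstance)
      (LinearMap.proj (𝟙 E) ∘ₗ (g.app E).hom)
    refine ⟨dualYonedaLift β, ?_⟩
    rw [comp_dualYonedaLift, eq_dualYonedaLift g]
    exact congrArg dualYonedaLift (LinearMap.ext hβ)

lemma dualYonedaLift_linearCombination_app {X : C} (p : (E ⟶ E) → k) :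
    (dualYonedaLift (M := freeCoyoneda k E) (Finsupp.linearCombination k p)).app X =
      ModuleCat.ofHom (Finsupp.linearCombination k fun Q S => p (Q ≫ S)) := by
  ext1
  refine Finsupp.lhom_ext fun Q c => funext fun S => ?_
  change Finsupp.linearCombination k p (Finsupp.mapDomain _ (Finsupp.single Q c)) =
    Finsupp.linearCombination k (fun Q S => p (Q ≫ S)) (Finsupp.single Q c) S
  rw [Finsupp.mapDomain_single, Finsupp.linearCombination_single,
    Finsupp.linearCombination_single]
  rfl

end DualYoneda

section Birkhoff

variable {T : Type} [DistribLattice T] [Fintype T] [OrderBot T]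

lemma mem_birkhoffFinset {a : T} {b : {a : T // SupIrred a}} :
    b ∈ OrderEmbedding.birkhoffFinset a ↔ (b : T) ≤ a := by
  rw [← Finset.mem_coe, OrderEmbedding.coe_birkhoffFinset, OrderEmbedding.birkhoffSet_apply]
  rfl

lemma sup_birkhoffFinset (a : T) : (OrderEmbedding.birkhoffFinset a).sup Subtype.val = a := by
  refine le_antisymm (Finset.sup_le fun b hb => mem_birkhoffFinset.1 hb) ?_
  obtain ⟨s, rfl, hs⟩ := exists_supIrred_decomposition a
  exact Finset.sup_le fun b hb => Finset.le_sup (f := Subtype.val) (b := ⟨b, hs hb⟩)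
    (mem_birkhoffFinset.2 (Finset.le_sup (f := id) hb))

noncomputable def birkhoffSupBotHom [DecidableEq T] :
    SupBotHom T (Finset {a : T // SupIrred a}) where
  toFun := OrderEmbedding.birkhoffFinset
  map_sup' := OrderEmbedding.birkhoffFinset_sup
  map_bot' := Finset.eq_empty_of_forall_notMem fun b hb =>
    b.2.ne_bot (le_bot_iff.1 (mem_birkhoffFinset.1 hb))

end Birkhoff

def Finset.supBotHom {ι L : Type*} [DecidableEq ι] [SemilatticeSup L] [OrderBot L]
    (f : ι → L) : SupBotHom (Finset ι) L where
  toFun s := s.sup f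
  map_sup' _ _ := Finset.sup_union
  map_bot' := Finset.sup_empty

section Correspondences

variable {X Y E : Type}

noncomputable def graphEquiv [Fintype E] : (X → Finset E) ≃ Set (X × E) where
  toFun ψ := {p | p.2 ∈ ψ p.1}
  invFun Q x := Finset.univ.filter fun e => (x, e) ∈ Q
  left_inv ψ := by ext; simp
  right_inv Q := by ext; simp

lemma graphEquiv_corrApp [Fintype X] [Fintype E] [DecidableEq E] (Q : Set (Y × X))
    (ψ : X → Finset E) : graphEquiv (corrApp Q ψ) = corrComp Q (graphEquiv ψ) := by
  ext ⟨y, e⟩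
  simp [graphEquiv, corrApp, corrComp, Finset.mem_sup]

lemma disjoint_deltaCorr_corrComp_iff (Q : Set (X × E)) (S : Set (E × X)) :
    Disjoint (deltaCorr E) (corrComp S Q) ↔ Q ⊆ (corrOp S)ᶜ := by
  simp only [Set.disjoint_left, deltaCorr, corrComp, corrOp, Set.mem_ofPred_eq, not_exists,
    not_and, Set.subset_def, Set.mem_compl_iff, Prod.forall, forall_eq']
  exact ⟨fun h x e hQ hS => h e x hS hQ, fun h e x hS hQ => h x e hQ hS⟩

lemma bijective_compl_corrOp : Function.Bijective fun S : Set (Y × X) => (corrOp S)ᶜ :=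
  Function.bijective_iff_has_inverse.2
    ⟨fun Q => corrOp Qᶜ, fun S => by ext; simp [corrOp], fun Q => by ext; simp [corrOp]⟩

end Correspondences

namespace CorrCat

def of (E : Type) [Fintype E] : CorrCat := ⟨E⟩

section LatticeMaps

variable (L : Type) [SemilatticeSup L] [OrderBot L]

noncomputable def latticeMaps : CorrCat ⥤ Type where
  obj X := X.carrier → L
  map Q := TypeCat.ofHom (corrApp Q)
  map_id _ := ConcreteCategory.hom_ext _ _ corrApp_id
  map_comp f g := ConcreteCategory.hom_ext _ _ (corrApp_comp g f)

variable {L} {L' L'' : Type} [SemilatticeSup L'] [OrderBot L'] [SemilatticeSup L''] [OrderBot L'']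

noncomputable def latticeMapsPostcomp (u : SupBotHom L L') : latticeMaps L ⟶ latticeMaps L' where
  app _ := TypeCat.ofHom (u ∘ ·)
  naturality _ _ _ := ConcreteCategory.hom_ext _ _ fun φ => funext fun _ => map_finset_sup u _ φ

lemma latticeMapsPostcomp_comp (u : SupBotHom L L') (w : SupBotHom L' L'') :
    latticeMapsPostcomp u ≫ latticeMapsPostcomp w = latticeMapsPostcomp (w.comp u) := by
  ext
  rfl

lemma latticeMapsPostcomp_id : latticeMapsPostcomp (SupBotHom.id L) = 𝟙 _ := by
  ext
  rfl

noncomputable def latticeMapsRetract (T : Type) [DistribLattice T] [Fintype T] [OrderBot T]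
    [DecidableEq T] : Retract (latticeMaps T) (latticeMaps (Finset {a : T // SupIrred a})) where
  i := latticeMapsPostcomp birkhoffSupBotHom
  r := latticeMapsPostcomp (Finset.supBotHom Subtype.val)
  retract := by
    rw [latticeMapsPostcomp_comp, ← latticeMapsPostcomp_id]
    congr 1
    ext a
    exact sup_birkhoffFinset a

end LatticeMaps

variable (E : Type) [Fintype E]

noncomputable def latticeMapsIsoCoyoneda [DecidableEq E] :
    latticeMaps (Finset E) ≅ coyoneda.obj (Opposite.op (of E)) :=
  NatIso.ofComponents (fun X => (graphEquiv (X := X.carrier) (E := E)).toIso) fun Q =>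
    ConcreteCategory.hom_ext _ _ (graphEquiv_corrApp Q)

noncomputable def selfPairing : freeCoyoneda k (of E) ⟶ dualYoneda k (of E) :=
  dualYonedaLift (Finsupp.linearCombination k fun R : of E ⟶ of E =>
    if Disjoint (deltaCorr E) R then 1 else 0)

variable {E}

lemma bijective_selfPairing_app (X : CorrCat) : Function.Bijective ((selfPairing k E).app X) := by
  have h : (fun (Q : Set (X × E)) (S : Set (E × X)) =>
        if Disjoint (deltaCorr E) (corrComp S Q) then (1 : k) else 0) =
      LinearMap.funLeft k k (fun S : Set (E × X) => (corrOp S)ᶜ) ∘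
        fun Q R : Set (X × E) => if Q ≤ R then (1 : k) else 0 := by
    funext Q S
    simp only [disjoint_deltaCorr_corrComp_iff, Function.comp_apply, LinearMap.funLeft_apply]
  rw [selfPairing, dualYonedaLift_linearCombination_app]
  change Function.Bijective
    (Finsupp.linearCombination k fun (Q : Set (X × E)) (S : Set (E × X)) =>
      if Disjoint (deltaCorr E) (corrComp S Q) then (1 : k) else 0)
  rw [h, Finsupp.linearCombination_linear_comp, LinearMap.coe_comp]
  exact Function.Bijective.comp
    ⟨LinearMap.funLeft_injective_of_surjective _ _ _ bijective_compl_corrOp.2,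
      LinearMap.funLeft_surjective_of_injective _ _ _ bijective_compl_corrOp.1⟩
    bijective_linearCombination_le

instance isIso_selfPairing : IsIso (selfPairing k E) :=
  have (X : CorrCat) : IsIso ((selfPairing k E).app X) :=
    (ConcreteCategory.isIso_iff_bijective _).2 (bijective_selfPairing_app k X)
  NatIso.isIso_of_isIso_app _

variable {k}

theorem injective_freeCoyoneda (hk : Module.Injective k k) : Injective (freeCoyoneda k (of E)) :=
  Injective.of_iso (asIso (selfPairing k E)).symm (injective_dualYoneda hk)

-- `FT k T` is definitionally `latticeMaps T ⋙ ModuleCat.free k`.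
variable (k) in
noncomputable def retractFreeCoyoneda (T : Type) [DistribLattice T] [Fintype T] [OrderBot T]
    [DecidableEq T] : Retract (FT k T) (freeCoyoneda k (of {a : T // SupIrred a})) :=
  ((latticeMapsRetract T).map ((Functor.whiskeringRight _ _ _).obj (ModuleCat.free k))).trans
    (Functor.isoWhiskerRight (latticeMapsIsoCoyoneda _) (ModuleCat.free k)).retract

end CorrCat

/-- **Statement 11.** If `k` is a self-injective commutative ring, then for every finite
distributive lattice `T`, the correspondence functor `F_T` is both projective and
injective in the category of correspondence functors over `k`. -/
theorem FT_projective_and_injective_of_selfInjective (k : Type) [CommRing k]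
    (hk : Module.Injective k k)
    (T : Type) [DistribLattice T] [Fintype T] [BoundedOrder T] :
    CategoryTheory.Projective (FT k T) ∧ CategoryTheory.Injective (FT k T) :=
  have := CorrCat.injective_freeCoyoneda (E := {a : T // SupIrred a}) hk
  ⟨(CorrCat.retractFreeCoyoneda k T).projective, (CorrCat.retractFreeCoyoneda k T).injective⟩
end

section
/- Let R be a partial order on a finite set E, viewed as the correspondence {(a,b) ∈ E × E | a ≤_R b}, let X be a finite set, and let U ⊆ E × X and S ⊆ X × E be correspondences with SR = S. Then: (i) US = R if and only if RUS = R; (ii) for every permutation σ of E, writing Δ_σ = {(σ(x), x) | x ∈ E}, one has Δ_E ⊆ Δ_{σ^{-1}} U S ⊆ R if and only if US = Δ_σ R. -/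
open scoped Classical

/-!
Write `T = US`. From `SR = S` one gets `TR = T`, i.e. every row of `T` is an up-set of `E`.
A correspondence `T` with `TR = T` equals `R` as soon as `Δ_E ⊆ T ⊆ R`, since then row `a`
is an up-set containing `a` and contained in `{b | a ≤ b}`. This gives (i), because `RT = R` forces
`T ⊆ R` (by reflexivity) and `(a, a) ∈ T` (by antisymmetry), and it gives (ii), because
composing with `Δ_{σ⁻¹}` only permutes the rows, so `Δ_{σ⁻¹}T = R ↔ T = Δ_σ R`.
-/

section Correspondences

variable {W X Y Z : Type*}

@[simp]
theorem mem_corrComp {R : Set (Z × Y)} {S : Set (Y × X)} {z : Z} {x : X} :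
    (z, x) ∈ corrComp R S ↔ ∃ y, (z, y) ∈ R ∧ (y, x) ∈ S :=
  Iff.rfl

theorem corrComp_assoc (Q : Set (W × Z)) (R : Set (Z × Y)) (S : Set (Y × X)) :
    corrComp (corrComp Q R) S = corrComp Q (corrComp R S) := by
  ext ⟨w, x⟩
  simp only [mem_corrComp]
  constructor
  · rintro ⟨y, ⟨z, hwz, hzy⟩, hyx⟩
    exact ⟨z, hwz, y, hzy, hyx⟩
  · rintro ⟨z, hwz, y, hzy, hyx⟩
    exact ⟨y, ⟨z, hwz, hzy⟩, hyx⟩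

theorem mem_corrComp_perm_graph (σ : Equiv.Perm Z) (T : Set (Z × X)) {z : Z} {x : X} :
    (z, x) ∈ corrComp {p : Z × Z | p.1 = σ p.2} T ↔ (σ⁻¹ z, x) ∈ T := by
  simp only [mem_corrComp, Set.mem_ofPred_eq]
  constructor
  · rintro ⟨y, rfl, hyx⟩
    simpa using hyx
  · exact fun h => ⟨σ⁻¹ z, by simp, h⟩

theorem corrComp_perm_graph_inv_eq_iff (σ : Equiv.Perm Z) (T R : Set (Z × X)) :
    corrComp {p : Z × Z | p.1 = σ⁻¹ p.2} T = R ↔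
      T = corrComp {p : Z × Z | p.1 = σ p.2} R := by
  simp only [Set.ext_iff, Prod.forall, mem_corrComp_perm_graph, inv_inv]
  constructor
  · intro h z x
    simpa using h (σ⁻¹ z) x
  · intro h z x
    simpa using h (σ z) x

end Correspondences

section UpClosed

variable {E W : Type*}

theorem mem_of_mem_of_le [Preorder E] {T : Set (W × E)}
    (hT : corrComp T {p : E × E | p.1 ≤ p.2} = T) {w : W} {a b : E}
    (ha : (w, a) ∈ T) (hab : a ≤ b) : (w, b) ∈ T := by
  rw [← hT]
  exact ⟨a, ha, hab⟩

theorem eq_le_iff_deltaCorr_subset_and_subset_le [Preorder E] {T : Set (E × E)}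
    (hT : corrComp T {p : E × E | p.1 ≤ p.2} = T) :
    T = {p : E × E | p.1 ≤ p.2} ↔ deltaCorr E ⊆ T ∧ T ⊆ {p : E × E | p.1 ≤ p.2} := by
  constructor
  · rintro rfl
    exact ⟨fun p (hp : p.1 = p.2) => le_of_eq hp, subset_rfl⟩
  · rintro ⟨hdiag, hle⟩
    refine hle.antisymm fun p (hp : p.1 ≤ p.2) => mem_of_mem_of_le hT ?_ hp
    exact hdiag (show p.1 = p.1 from rfl)

theorem eq_le_iff_le_corrComp_eq [PartialOrder E] {T : Set (E × E)}
    (hT : corrComp T {p : E × E | p.1 ≤ p.2} = T) :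
    T = {p : E × E | p.1 ≤ p.2} ↔
      corrComp {p : E × E | p.1 ≤ p.2} T = {p : E × E | p.1 ≤ p.2} := by
  constructor
  · rintro rfl
    exact hT
  · intro hRT
    have hle : T ⊆ {p : E × E | p.1 ≤ p.2} := fun p hp => by
      rw [← hRT]
      exact ⟨p.1, le_rfl, hp⟩
    have hdiag : deltaCorr E ⊆ T := by
      rintro ⟨a, _⟩ ⟨⟩
      have haa : (a, a) ∈ corrComp {p : E × E | p.1 ≤ p.2} T := by
        rw [hRT]
        exact le_refl a
      obtain ⟨b, hab, hba⟩ := mem_corrComp.1 haa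
      have hba_eq : b = a := le_antisymm (hle hba) hab
      rwa [hba_eq] at hba
    exact (eq_le_iff_deltaCorr_subset_and_subset_le hT).2 ⟨hdiag, hle⟩

end UpClosed

theorem retraction_conditions_general (E : Type) [PartialOrder E]
    (X : Type) (U : Set (E × X)) (S : Set (X × E))
    (hS : corrComp S {p : E × E | p.1 ≤ p.2} = S) :
    (corrComp U S = {p : E × E | p.1 ≤ p.2} ↔
      corrComp {p : E × E | p.1 ≤ p.2} (corrComp U S) = {p : E × E | p.1 ≤ p.2}) ∧
    (∀ σ : Equiv.Perm E,
      (deltaCorr E ⊆ corrComp {p : E × E | p.1 = σ⁻¹ p.2} (corrComp U S) ∧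
        corrComp {p : E × E | p.1 = σ⁻¹ p.2} (corrComp U S) ⊆ {p : E × E | p.1 ≤ p.2})
        ↔ corrComp U S = corrComp {p : E × E | p.1 = σ p.2} {p : E × E | p.1 ≤ p.2}) := by
  have hUS : corrComp (corrComp U S) {p : E × E | p.1 ≤ p.2} = corrComp U S := by
    rw [corrComp_assoc, hS]
  refine ⟨eq_le_iff_le_corrComp_eq hUS, fun σ => ?_⟩
  rw [← corrComp_perm_graph_inv_eq_iff,
    eq_le_iff_deltaCorr_subset_and_subset_le (by rw [corrComp_assoc, hUS])]

/-- **Statement 13.** Let `R` be a partial order on a finite set `E` (viewed as a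
correspondence), and `U ⊆ E × X`, `S ⊆ X × E` with `SR = S`. Then (i) `US = R` iff
`RUS = R`; (ii) for every permutation `σ` of `E`, `Δ_E ⊆ Δ_{σ⁻¹} U S ⊆ R` iff
`US = Δ_σ R`. -/
theorem retraction_conditions (E : Type) [Fintype E] [PartialOrder E]
    (X : Type) [Fintype X] (U : Set (E × X)) (S : Set (X × E))
    (hS : corrComp S {p : E × E | p.1 ≤ p.2} = S) :
    (corrComp U S = {p : E × E | p.1 ≤ p.2} ↔
      corrComp {p : E × E | p.1 ≤ p.2} (corrComp U S) = {p : E × E | p.1 ≤ p.2}) ∧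
    (∀ σ : Equiv.Perm E,
      (deltaCorr E ⊆ corrComp {p : E × E | p.1 = σ⁻¹ p.2} (corrComp U S) ∧
        corrComp {p : E × E | p.1 = σ⁻¹ p.2} (corrComp U S) ⊆ {p : E × E | p.1 ≤ p.2})
        ↔ corrComp U S = corrComp {p : E × E | p.1 = σ p.2} {p : E × E | p.1 ≤ p.2}) :=
  retraction_conditions_general E X U S hS
end

section
/- Let n be a natural number and k a commutative ring. Let M be the monoid, under composition, of all order-preserving maps f : {0,1,…,n} → {0,1,…,n} with f(0) = 0 (equivalently, the join-preserving endomaps of the totally ordered lattice 0 < 1 < ⋯ < n). Then the monoid algebra k[M] is isomorphic, as a k-algebra, to the direct product ∏_{m=0}^n M_{C(n,m)}(k) of full matrix algebras of sizes the binomial coefficients C(n,m). -/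
/-- The monoid, under composition, of order-preserving maps
`f : {0,…,n} → {0,…,n}` with `f 0 = 0`. -/
def OPMonoid (n : ℕ) : Type :=
  {f : Fin (n + 1) → Fin (n + 1) // Monotone f ∧ f 0 = 0}

instance (n : ℕ) : Monoid (OPMonoid n) where
  one := ⟨id, monotone_id, rfl⟩
  mul f g := ⟨f.1 ∘ g.1, f.2.1.comp g.2.1, by
    show f.1 (g.1 0) = 0
    rw [g.2.2, f.2.2]⟩
  mul_assoc f g h := rfl
  one_mul f := rfl
  mul_one f := rfl

/-!
Subsets of `{1, …, n}` are encoded as `Finset (Fin n)` through `Fin.succ`. The monoid acts on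
the free `k`-module on the `m`-element subsets by `f • S = f(S)` when `f` is injective on `S`
and `0 ∉ f(S)`, and by `f • S = 0` otherwise; this gives an algebra map
`k[M] → ∏ₘ M_{C(n,m)}(k)`.

A map `f` is determined by its set `J` of jumps (`f s < f (s + 1)`) and its set `I` of nonzero
values, and every pair of subsets of equal size occurs, so the elements of `M` are indexed like
the matrix units. The matrix of `f` has entry `1` at `(I, J)`, and any other nonzero entry
`(T, S)` has `T ⊊ I`, or `T = I` and `∑ S > ∑ J`. Ordering the matrix units by `|T|` and then
by `-∑ S` makes the algebra map unitriangular, hence bijective over any commutative ring.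
-/

open Finset OrderDual Module

theorem StrictMonoOn.eqOn_of_image_eq {α β : Type*} [LinearOrder α] [Preorder β] {s : Finset α}
    {f g : α → β} (hf : StrictMonoOn f s) (hg : StrictMonoOn g s) (h : f '' s = g '' s) :
    Set.EqOn f g s := by
  have := hf.domRestrict.range_inj hg.domRestrict
  rw [Set.range_domRestrict, Set.range_domRestrict] at this
  intro x hx
  exact congrFun (this.mp h) ⟨x, hx⟩

namespace LinearMap

variable {R M N ι β : Type*} [Ring R] [AddCommGroup M] [Module R M] [AddCommGroup N] [Module R N]
  [LinearOrder β] (b : Basis ι R M) (c : Basis ι R N) (w : ι → β) (φ : M →ₗ[R] N)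

theorem injective_of_unitriangular (hdiag : ∀ i, c.repr (φ (b i)) i = 1)
    (htri : ∀ i j, i ≠ j → c.repr (φ (b j)) i ≠ 0 → w i < w j) :
    Function.Injective φ := by
  rw [← ker_eq_bot, Submodule.eq_bot_iff]
  intro x hx
  by_contra hx0
  obtain ⟨i, hi, hmax⟩ := (b.repr x).support.exists_max_image w
    (Finsupp.support_nonempty_iff.mpr (by simpa using hx0))
  have hcoord : c.repr (φ x) i = b.repr x i := by
    conv_lhs => rw [← b.linearCombination_repr x, Finsupp.linearCombination_apply, Finsupp.sum]
    simp only [map_sum, map_smul, Finsupp.coe_finsetSum, Finset.sum_apply, Finsupp.coe_smul,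
      Pi.smul_apply, smul_eq_mul]
    refine (Finset.sum_eq_single_of_mem i hi fun j hj hji => ?_).trans (by rw [hdiag, mul_one])
    by_cases h : c.repr (φ (b j)) i = 0
    · rw [h, mul_zero]
    · exact absurd (hmax j hj) (not_le.mpr (htri i j (Ne.symm hji) h))
  rw [mem_ker.mp hx, map_zero, Finsupp.zero_apply] at hcoord
  exact Finsupp.mem_support_iff.mp hi hcoord.symm

theorem surjective_of_unitriangular [Finite ι] (hdiag : ∀ i, c.repr (φ (b i)) i = 1)
    (htri : ∀ i j, i ≠ j → c.repr (φ (b j)) i ≠ 0 → w i < w j) :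
    Function.Surjective φ := by
  classical
  have := Fintype.ofFinite ι
  have hwf : WellFounded (InvImage (· < ·) w) := Finite.wellFounded_of_trans_of_irrefl _
  have hc : ∀ i, c i ∈ range φ := by
    intro i
    induction i using hwf.induction with
    | _ i ih =>
    have hexp : φ (b i) = c i + ∑ j ∈ Finset.univ.erase i, c.repr (φ (b i)) j • c j := by
      conv_lhs => rw [← c.sum_repr (φ (b i)), ← Finset.add_sum_erase _ _ (Finset.mem_univ i),
        hdiag, one_smul]
    rw [eq_sub_of_add_eq hexp.symm]
    refine sub_mem (mem_range_self φ _) (Submodule.sum_mem _ fun j hj => ?_)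
    by_cases h : c.repr (φ (b i)) j = 0
    · rw [h, zero_smul]; exact zero_mem _
    · exact Submodule.smul_mem _ _ (ih j (htri j i (Finset.ne_of_mem_erase hj) h))
  rw [← range_eq_top, eq_top_iff, ← c.span_eq, Submodule.span_le]
  rintro _ ⟨i, rfl⟩
  exact hc i

end LinearMap

namespace OPMonoid

section Combinatorics

variable {n : ℕ}

def jumpSet (f : Fin (n + 1) → Fin (n + 1)) : Finset (Fin n) :=
  {s | f s.castSucc < f s.succ}

def nonzeroValues (f : Fin (n + 1) → Fin (n + 1)) : Finset (Fin n) :=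
  {t | ∃ x, f x = t.succ}

def MapsOnto (f : Fin (n + 1) → Fin (n + 1)) (S T : Finset (Fin n)) : Prop :=
  S.image (f ∘ Fin.succ) = T.image Fin.succ

instance (f : Fin (n + 1) → Fin (n + 1)) (S T : Finset (Fin n)) : Decidable (MapsOnto f S T) :=
  inferInstanceAs (Decidable (_ = _))

section MapsOnto

variable {f g : Fin (n + 1) → Fin (n + 1)} {S T U : Finset (Fin n)}

theorem mem_jumpSet {s : Fin n} : s ∈ jumpSet f ↔ f s.castSucc < f s.succ := by
  simp [jumpSet]

theorem mem_nonzeroValues {t : Fin n} : t ∈ nonzeroValues f ↔ ∃ x, f x = t.succ := by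
  simp [nonzeroValues]

theorem mapsOnto_id : MapsOnto id S T ↔ S = T :=
  (Finset.image_injective (Fin.succ_injective n)).eq_iff

theorem MapsOnto.comp (hg : MapsOnto g S U) (hf : MapsOnto f U T) : MapsOnto (f ∘ g) S T := by
  rw [MapsOnto, ← hf, Function.comp_assoc, ← image_image, hg, image_image]

theorem MapsOnto.right_unique {T' : Finset (Fin n)} (h : MapsOnto f S T) (h' : MapsOnto f S T') :
    T = T' :=
  Finset.image_injective (Fin.succ_injective n) (h.symm.trans h')

theorem MapsOnto.card_le (h : MapsOnto f S T) : T.card ≤ S.card := by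
  rw [← card_image_of_injective T (Fin.succ_injective n), ← h]
  exact card_image_le

theorem MapsOnto.exists_of_comp (hf0 : f 0 = 0) (h : MapsOnto (f ∘ g) S T) :
    ∃ U, MapsOnto g S U ∧ MapsOnto f U T := by
  have hzero : (0 : Fin (n + 1)) ∉ S.image (g ∘ Fin.succ) := by
    intro h0
    have h0' := mem_image_of_mem f h0
    rw [image_image, ← Function.comp_assoc, h] at h0'
    obtain ⟨t, -, ht⟩ := mem_image.mp h0'
    exact Fin.succ_ne_zero t (ht.trans hf0)
  set U := (S.image (g ∘ Fin.succ)).preimage Fin.succ (Fin.succ_injective n).injOn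
  have hU : U.image Fin.succ = S.image (g ∘ Fin.succ) := by
    rw [image_preimage, filter_true_of_mem]
    intro x hx
    exact Fin.exists_succ_eq.mpr (ne_of_mem_of_not_mem hx hzero)
  refine ⟨U, hU.symm, ?_⟩
  rw [MapsOnto, ← image_image, hU, image_image, ← h]
  rfl

theorem MapsOnto.injOn (h : MapsOnto f S T) (hST : S.card = T.card) :
    Set.InjOn (f ∘ Fin.succ) S :=
  injOn_of_card_image_eq (by rw [h, card_image_of_injective _ (Fin.succ_injective n), hST])

theorem MapsOnto.subset_nonzeroValues (h : MapsOnto f S T) : T ⊆ nonzeroValues f := by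
  intro t ht
  obtain ⟨s, -, hs⟩ := mem_image.mp (h ▸ mem_image_of_mem Fin.succ ht : t.succ ∈ S.image _)
  exact mem_nonzeroValues.mpr ⟨_, hs⟩

end MapsOnto

section Monotone

variable {f g : Fin (n + 1) → Fin (n + 1)}

theorem apply_succ_eq_of_notMem_jumpSet (hf : Monotone f) {s : Fin n} (hs : s ∉ jumpSet f) :
    f s.succ = f s.castSucc :=
  le_antisymm (not_lt.mp (mem_jumpSet.not.mp hs)) (hf (Fin.castSucc_le_succ s))

theorem apply_succ_lt_of_lt_of_mem_jumpSet (hf : Monotone f) {s s' : Fin n} (hss' : s < s')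
    (hs' : s' ∈ jumpSet f) : f s.succ < f s'.succ :=
  (hf (Fin.succ_le_castSucc_iff.mpr hss')).trans_lt (mem_jumpSet.mp hs')

theorem strictMonoOn_jumpSet (hf : Monotone f) : StrictMonoOn (f ∘ Fin.succ) (jumpSet f) :=
  fun _ _ _ hs' hss' => apply_succ_lt_of_lt_of_mem_jumpSet hf hss' hs'

theorem mapsOnto_jumpSet_nonzeroValues (hf : Monotone f) (hf0 : f 0 = 0) :
    MapsOnto f (jumpSet f) (nonzeroValues f) := by
  apply Subset.antisymm
  · intro y hy
    obtain ⟨s, hs, rfl⟩ := mem_image.mp hy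
    have hne : f s.succ ≠ 0 := (Fin.zero_le _ |>.trans_lt (mem_jumpSet.mp hs)).ne'
    obtain ⟨t, ht⟩ := Fin.exists_succ_eq.mpr hne
    exact mem_image.mpr ⟨t, mem_nonzeroValues.mpr ⟨_, ht.symm⟩, ht⟩
  · intro y hy
    obtain ⟨t, ht, rfl⟩ := mem_image.mp hy
    obtain ⟨x, hx⟩ := mem_nonzeroValues.mp ht
    -- the first point of the fibre over `t.succ` is the successor of a jump
    obtain ⟨y, hy, hmin⟩ := exists_min_image {z | f z = t.succ} id ⟨x, by simpa using hx⟩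
    have hfy : f y = t.succ := (mem_filter.mp hy).2
    have hy0 : y ≠ 0 := fun h => Fin.succ_ne_zero t (by rw [← hfy, h, hf0])
    obtain ⟨s, rfl⟩ := Fin.exists_succ_eq.mpr hy0
    have hjump : s ∈ jumpSet f := by
      refine mem_jumpSet.mpr ((hf (Fin.castSucc_le_succ s)).lt_of_ne fun h => ?_)
      have := hmin s.castSucc (by simpa [h] using hfy)
      exact absurd this (not_le.mpr Fin.castSucc_lt_succ)
    exact mem_image.mpr ⟨s, hjump, hfy⟩

theorem card_jumpSet (hf : Monotone f) (hf0 : f 0 = 0) :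
    (jumpSet f).card = (nonzeroValues f).card := by
  rw [← card_image_of_injOn (strictMonoOn_jumpSet hf).injOn,
    mapsOnto_jumpSet_nonzeroValues hf hf0,
    card_image_of_injective _ (Fin.succ_injective n)]

theorem sum_jumpSet_lt (hf : Monotone f) (hf0 : f 0 = 0) {S : Finset (Fin n)}
    (h : MapsOnto f S (nonzeroValues f)) (hS : S.card = (nonzeroValues f).card)
    (hne : S ≠ jumpSet f) :
    ∑ s ∈ jumpSet f, (s : ℕ) < ∑ s ∈ S, (s : ℕ) := by
  obtain ⟨x₀, hx₀S, hx₀J⟩ : ∃ x ∈ S, x ∉ jumpSet f := by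
    by_contra! hsub
    exact hne (eq_of_subset_of_card_le hsub (by rw [hS, card_jumpSet hf hf0]))
  have : Nonempty (Fin n) := ⟨x₀⟩
  have hJ := mapsOnto_jumpSet_nonzeroValues hf hf0
  -- `j x` is the jump in the fibre of `f` through `x.succ`, and it lies weakly left of `x`
  set j : Fin n → Fin n := fun x => Function.invFunOn (f ∘ Fin.succ) (jumpSet f) (f x.succ)
  have hj : ∀ x ∈ S, j x ∈ jumpSet f ∧ f (j x).succ = f x.succ := by
    intro x hx
    have : (f ∘ Fin.succ) x ∈ (f ∘ Fin.succ) '' (jumpSet f : Set (Fin n)) := by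
      rw [← coe_image, hJ, ← h]
      exact mem_image_of_mem _ hx
    exact ⟨Function.invFunOn_mem this, Function.invFunOn_eq this⟩
  have hle : ∀ x ∈ S, j x ≤ x := fun x hx => not_lt.mp fun hlt =>
    (apply_succ_lt_of_lt_of_mem_jumpSet hf hlt (hj x hx).1).ne (hj x hx).2.symm
  have hinj : Set.InjOn j S := fun x hx y hy hxy =>
    h.injOn hS hx hy <| by
      rw [Function.comp_apply, Function.comp_apply, ← (hj x hx).2, hxy, (hj y hy).2]
  have hsum : ∑ s ∈ jumpSet f, (s : ℕ) = ∑ x ∈ S, (j x : ℕ) :=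
    (sum_nbij j (fun x hx => (hj x hx).1) hinj (surjOn_of_injOn_of_card_le j
      (fun x hx => (hj x hx).1) hinj (by rw [hS, card_jumpSet hf hf0])) fun _ _ => rfl).symm
  rw [hsum]
  exact sum_lt_sum (fun x hx => Fin.val_le_of_le (hle x hx))
    ⟨x₀, hx₀S, (hle x₀ hx₀S).lt_of_ne fun hx => hx₀J (hx ▸ (hj x₀ hx₀S).1)⟩

theorem toLex_lt_of_mapsOnto (hf : Monotone f) (hf0 : f 0 = 0) {S T : Finset (Fin n)}
    (h : MapsOnto f S T) (hST : S.card = T.card) (hne : ¬(S = jumpSet f ∧ T = nonzeroValues f)) :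
    toLex (T.card, toDual (∑ s ∈ S, (s : ℕ))) <
      toLex ((nonzeroValues f).card, toDual (∑ s ∈ jumpSet f, (s : ℕ))) := by
  rw [Prod.Lex.toLex_lt_toLex]
  rcases (card_le_card h.subset_nonzeroValues).lt_or_eq with hlt | heq
  · exact Or.inl hlt
  · obtain rfl := eq_of_subset_of_card_le h.subset_nonzeroValues heq.ge
    exact Or.inr ⟨rfl, sum_jumpSet_lt hf hf0 h hST fun hS => hne ⟨hS, rfl⟩⟩

theorem eq_of_jumpSet_eq_of_nonzeroValues_eq (hf : Monotone f) (hf0 : f 0 = 0) (hg : Monotone g)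
    (hg0 : g 0 = 0) (hJ : jumpSet f = jumpSet g) (hI : nonzeroValues f = nonzeroValues g) :
    f = g := by
  have hagree : Set.EqOn (f ∘ Fin.succ) (g ∘ Fin.succ) (jumpSet f) := by
    refine (strictMonoOn_jumpSet hf).eqOn_of_image_eq (hJ ▸ strictMonoOn_jumpSet hg) ?_
    rw [← coe_image, ← coe_image, mapsOnto_jumpSet_nonzeroValues hf hf0, hJ,
      mapsOnto_jumpSet_nonzeroValues hg hg0, hI]
  funext x
  induction x using Fin.induction with
  | zero => rw [hf0, hg0]
  | succ s ih =>
    by_cases hs : s ∈ jumpSet f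
    · exact hagree hs
    · rw [apply_succ_eq_of_notMem_jumpSet hf hs,
        apply_succ_eq_of_notMem_jumpSet hg (hJ ▸ hs), ih]

end Monotone

section OfJumps

def countBelow (S : Finset (Fin n)) (x : Fin (n + 1)) : ℕ :=
  #{s ∈ S | s.castSucc < x}

theorem countBelow_le_card (S : Finset (Fin n)) (x : Fin (n + 1)) : countBelow S x ≤ S.card :=
  card_filter_le _ _

theorem countBelow_mono (S : Finset (Fin n)) : Monotone (countBelow S) :=
  fun _ _ hxy => card_le_card (monotone_filter_right S fun _ _ h => h.trans_le hxy)

theorem countBelow_zero (S : Finset (Fin n)) : countBelow S 0 = 0 := by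
  simp [countBelow]

theorem countBelow_castSucc_lt_succ_iff {S : Finset (Fin n)} {s : Fin n} :
    countBelow S s.castSucc < countBelow S s.succ ↔ s ∈ S := by
  simp only [countBelow, Fin.castSucc_lt_castSucc_iff, Fin.castSucc_lt_succ_iff]
  constructor
  · intro h
    by_contra hs
    refine h.ne (congrArg card (filter_congr fun x hx => ?_))
    exact lt_iff_le_and_ne.trans (and_iff_left (ne_of_mem_of_not_mem hx hs))
  · intro hs
    refine card_lt_card ((ssubset_iff_of_subset ?_).mpr ⟨s, ?_, ?_⟩)
    · exact monotone_filter_right S fun _ _ h => h.le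
    · simpa using hs
    · simp

theorem card_insert_zero_image_succ (T : Finset (Fin n)) :
    (insert 0 (T.image Fin.succ)).card = T.card + 1 := by
  rw [card_insert_of_notMem (by simp [Fin.succ_ne_zero]),
    card_image_of_injective _ (Fin.succ_injective n)]

def ofJumps (S T : Finset (Fin n)) (h : S.card = T.card) (x : Fin (n + 1)) : Fin (n + 1) :=
  (insert 0 (T.image Fin.succ)).orderEmbOfFin (card_insert_zero_image_succ T)
    ⟨countBelow S x, Nat.lt_succ_of_le ((countBelow_le_card S x).trans h.le)⟩

variable {S T : Finset (Fin n)}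

theorem ofJumps_monotone (h : S.card = T.card) : Monotone (ofJumps S T h) :=
  fun _ _ hxy => (orderEmbOfFin _ _).monotone (Fin.mk_le_mk.mpr (countBelow_mono S hxy))

theorem ofJumps_zero (h : S.card = T.card) : ofJumps S T h 0 = 0 := by
  simp only [ofJumps, countBelow_zero, orderEmbOfFin_zero]
  exact le_antisymm (min'_le _ 0 (mem_insert_self _ _)) (Fin.zero_le _)

theorem jumpSet_ofJumps (h : S.card = T.card) : jumpSet (ofJumps S T h) = S := by
  ext s
  rw [mem_jumpSet, ofJumps, ofJumps, OrderEmbedding.lt_iff_lt, Fin.mk_lt_mk,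
    countBelow_castSucc_lt_succ_iff]

theorem nonzeroValues_ofJumps (h : S.card = T.card) : nonzeroValues (ofJumps S T h) = T := by
  refine eq_of_subset_of_card_le (fun t ht => ?_) ?_
  · obtain ⟨x, hx⟩ := mem_nonzeroValues.mp ht
    have hmem : ofJumps S T h x ∈ insert 0 (T.image Fin.succ) := orderEmbOfFin_mem _ _ _
    rw [hx, mem_insert, mem_image] at hmem
    obtain ⟨t', ht', hsucc⟩ := hmem.resolve_left (Fin.succ_ne_zero t)
    exact Fin.succ_injective n hsucc ▸ ht'
  · rw [← card_jumpSet (ofJumps_monotone h) (ofJumps_zero h), jumpSet_ofJumps h, h]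

end OfJumps

abbrev SubsetsOfCard (n m : ℕ) : Type := {S : Finset (Fin n) // S.card = m}

abbrev MatrixUnitIndex (n : ℕ) : Type :=
  Σ m : Fin (n + 1), SubsetsOfCard n m × SubsetsOfCard n m

theorem MatrixUnitIndex.ext {i j : MatrixUnitIndex n} (hT : i.2.1.1 = j.2.1.1)
    (hS : i.2.2.1 = j.2.2.1) : i = j := by
  obtain ⟨m, T, S⟩ := i
  obtain ⟨m', T', S'⟩ := j
  obtain rfl : m = m' := Fin.ext (T.2.symm.trans (hT ▸ T'.2))
  obtain rfl : T = T' := Subtype.ext hT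
  obtain rfl : S = S' := Subtype.ext hS
  rfl

def leadingIndex (f : OPMonoid n) : MatrixUnitIndex n :=
  ⟨⟨(nonzeroValues f.1).card,
      Nat.lt_succ_of_le ((card_le_univ _).trans_eq (Fintype.card_fin n))⟩,
    ⟨nonzeroValues f.1, rfl⟩, ⟨jumpSet f.1, card_jumpSet f.2.1 f.2.2⟩⟩

theorem leadingIndex_bijective : Function.Bijective (leadingIndex (n := n)) := by
  refine ⟨fun f g h => Subtype.ext ?_, fun ⟨m, T, S⟩ => ?_⟩
  · exact eq_of_jumpSet_eq_of_nonzeroValues_eq f.2.1 f.2.2 g.2.1 g.2.2 (congrArg (·.2.2.1) h)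
      (congrArg (·.2.1.1) h)
  · have h : S.1.card = T.1.card := S.2.trans T.2.symm
    exact ⟨⟨ofJumps S T h, ofJumps_monotone h, ofJumps_zero h⟩,
      MatrixUnitIndex.ext (nonzeroValues_ofJumps h) (jumpSet_ofJumps h)⟩

def weight (i : MatrixUnitIndex n) : ℕ ×ₗ ℕᵒᵈ :=
  toLex (i.2.1.1.card, toDual (∑ s ∈ i.2.2.1, (s : ℕ)))

end Combinatorics

abbrev MatrixProduct (k : Type) (n : ℕ) : Type :=
  ∀ m : Fin (n + 1), Matrix (SubsetsOfCard n m) (SubsetsOfCard n m) k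

def subsetRep (k : Type) [Semiring k] (n : ℕ) : OPMonoid n →* MatrixProduct k n where
  toFun f _ T S := if MapsOnto f.1 S.1 T.1 then 1 else 0
  map_one' := by
    funext m
    ext T S
    change (if MapsOnto id S.1 T.1 then (1 : k) else 0) = (1 : Matrix _ _ k) T S
    rw [Matrix.one_apply]
    exact if_congr ((mapsOnto_id.trans Subtype.ext_iff.symm).trans eq_comm) rfl rfl
  map_mul' f g := by
    funext m
    ext T S
    change (if MapsOnto (f.1 ∘ g.1) S.1 T.1 then (1 : k) else 0) =
      ∑ U : SubsetsOfCard n m, (if MapsOnto f.1 U.1 T.1 then 1 else 0) *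
        (if MapsOnto g.1 S.1 U.1 then 1 else 0)
    by_cases hfg : MapsOnto (f.1 ∘ g.1) S.1 T.1
    · obtain ⟨U, hgU, hfU⟩ := hfg.exists_of_comp f.2.2
      have hU : U.card = m := le_antisymm (hgU.card_le.trans S.2.le) (T.2 ▸ hfU.card_le)
      rw [if_pos hfg, Fintype.sum_eq_single ⟨U, hU⟩ fun U' hU' => ?_, if_pos hfU, if_pos hgU,
        one_mul]
      have hgU' : ¬MapsOnto g.1 S.1 U'.1 := fun hgU' => hU' (Subtype.ext (hgU'.right_unique hgU))
      rw [if_neg hgU', mul_zero]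
    · rw [if_neg hfg]
      refine (Finset.sum_eq_zero fun U _ => ?_).symm
      by_cases hgU : MapsOnto g.1 S.1 U.1
      · rw [if_neg fun hfU => hfg (hgU.comp hfU), zero_mul]
      · rw [if_neg hgU, mul_zero]

noncomputable def matrixUnitBasis (k : Type) [Semiring k] (n : ℕ) :
    Basis (MatrixUnitIndex n) k (MatrixProduct k n) :=
  Pi.basis fun m => Matrix.stdBasis k (SubsetsOfCard n m) (SubsetsOfCard n m)

theorem matrixUnitBasis_repr {k : Type} [Semiring k] {n : ℕ} (y : MatrixProduct k n)
    (i : MatrixUnitIndex n) :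
    (matrixUnitBasis k n).repr y i = y i.1 i.2.1 i.2.2 := by
  simp [matrixUnitBasis, Matrix.stdBasis]

theorem bijective_lift_subsetRep (k : Type) [CommRing k] (n : ℕ) :
    Function.Bijective (MonoidAlgebra.lift k (MatrixProduct k n) (OPMonoid n) (subsetRep k n)) := by
  set φ := MonoidAlgebra.lift k (MatrixProduct k n) (OPMonoid n) (subsetRep k n)
  let e := Equiv.ofBijective _ (leadingIndex_bijective (n := n))
  let b := (MonoidAlgebra.basis (OPMonoid n) k).reindex e
  have hcoord : ∀ f i, (matrixUnitBasis k n).repr (φ (b (e f))) i =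
      if MapsOnto f.1 i.2.2.1 i.2.1.1 then 1 else 0 := by
    intro f i
    rw [Basis.reindex_apply, e.symm_apply_apply, MonoidAlgebra.basis_apply,
      MonoidAlgebra.lift_single, one_smul, matrixUnitBasis_repr]
    rfl
  have hdiag : ∀ j, (matrixUnitBasis k n).repr (φ.toLinearMap (b j)) j = 1 := by
    intro j
    obtain ⟨f, rfl⟩ := e.surjective j
    exact (hcoord f _).trans (if_pos (mapsOnto_jumpSet_nonzeroValues f.2.1 f.2.2))
  have htri : ∀ i j, i ≠ j → (matrixUnitBasis k n).repr (φ.toLinearMap (b j)) i ≠ 0 →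
      weight i < weight j := by
    intro i j hij hnz
    obtain ⟨f, rfl⟩ := e.surjective j
    rw [AlgHom.toLinearMap_apply, hcoord] at hnz
    exact toLex_lt_of_mapsOnto f.2.1 f.2.2 (of_not_not fun h => hnz (if_neg h))
      (i.2.2.2.trans i.2.1.2.symm) fun ⟨hS, hT⟩ => hij (MatrixUnitIndex.ext hT hS)
  exact ⟨LinearMap.injective_of_unitriangular b _ weight φ.toLinearMap hdiag htri,
    LinearMap.surjective_of_unitriangular b _ weight φ.toLinearMap hdiag htri⟩

end OPMonoid

/-- **Statement 15.** The monoid algebra `k[M]`, for `M` the monoid of order-preserving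
maps `{0,…,n} → {0,…,n}` fixing `0`, is isomorphic as a `k`-algebra to the direct
product of matrix algebras `∏_{m=0}^n M_{C(n,m)}(k)`. -/
theorem monoidAlgebra_totalOrder_iso_matrix (k : Type) [CommRing k] (n : ℕ) :
    Nonempty (MonoidAlgebra k (OPMonoid n) ≃ₐ[k]
      (∀ m : Fin (n + 1), Matrix (Fin (n.choose (m : ℕ))) (Fin (n.choose (m : ℕ))) k)) :=
  ⟨(AlgEquiv.ofBijective _ (OPMonoid.bijective_lift_subsetRep k n)).trans
    (AlgEquiv.piCongrRight fun m => Matrix.reindexAlgEquiv k k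
      (Fintype.equivFinOfCardEq (by rw [Fintype.card_finset_len, Fintype.card_fin])))⟩
end
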